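/- Let k be a field of characteristic 0 and U = k⟨⟨X₀,X₁⟩⟩. For ψ ∈ U let d_ψ be the continuous derivation of U with d_ψ(X₀) = 0 and d_ψ(X₁) = [X₁, ψ], and define s_ψ(v) = ψv + d_ψ(v). Then for any ψ₁, ψ₂ ∈ U, defining the Ihara-type bracket {ψ₁,ψ₂} = d_{ψ₂}(ψ₁) − d_{ψ₁}(ψ₂) − [ψ₁,ψ₂], one has s_{{ψ₁,ψ₂}} = [s_{ψ₂}, s_{ψ₁}] = s_{ψ₂}∘s_{ψ₁} − s_{ψ₁}∘s_{ψ₂} as k-linear endomorphisms of U. -/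

import Mathlib

/-!
Each `d_ψ` is a derivation of `U`: `v ↦ v + ε d_ψ(v)` is the algebra map from `U` to `U ⊕ εU`
(`ε² = 0`) sending `Xᵢ` to `Xᵢ + ε d_ψ(Xᵢ)`. The commutator of two derivations is again one, and
`d_{ψ₂} d_{ψ₁} - d_{ψ₁} d_{ψ₂}` agrees with `d_{{ψ₁,ψ₂}}` on `X₀` and `X₁`, so the two coincide.
Expanding `s_{ψ₂} s_{ψ₁} - s_{ψ₁} s_{ψ₂}` with the Leibniz rule then leaves
`{ψ₁,ψ₂} v + [d_{ψ₂}, d_{ψ₁}] v = s_{{ψ₁,ψ₂}} v`.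
-/

noncomputable section

variable (k : Type) [Field k] [CharZero k]

abbrev U := FreeAlgebra k (Fin 2)

def X0 : U k := FreeAlgebra.ι k 0
def X1 : U k := FreeAlgebra.ι k 1

def derOn (g : Fin 2 → U k) : U k →ₗ[k] U k :=
  (FreeAlgebra.basisFreeMonoid k (Fin 2)).constr k fun w =>
    ∑ i ∈ Finset.range (FreeMonoid.toList w).length,
      (((FreeMonoid.toList w).take i).map (FreeAlgebra.ι k)).prod *
        g ((FreeMonoid.toList w).getD i 0) *
        (((FreeMonoid.toList w).drop (i + 1)).map (FreeAlgebra.ι k)).prod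

/-- `d_ψ`. -/
def dF (ψ : U k) : U k →ₗ[k] U k := derOn k ![0, X1 k * ψ - ψ * X1 k]

/-- `s_ψ(v) = ψ·v + d_ψ(v)`. -/
def sF (ψ : U k) (v : U k) : U k := ψ * v + dF k ψ v

/-- The Ihara-type bracket `{ψ₁,ψ₂} = d_{ψ₂}(ψ₁) − d_{ψ₁}(ψ₂) − [ψ₁,ψ₂]`. -/
def br (ψ₁ ψ₂ : U k) : U k := dF k ψ₂ ψ₁ - dF k ψ₁ ψ₂ - (ψ₁ * ψ₂ - ψ₂ * ψ₁)

open TrivSqZeroExt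

/-- Mathlib's `Derivation` requires a commutative algebra. -/
def LinearMap.IsDerivation {R A : Type*} [CommRing R] [Ring A] [Algebra R A]
    (D : A →ₗ[R] A) : Prop :=
  ∀ a b, D (a * b) = D a * b + a * D b

section Derivations

variable {R A : Type*} [CommRing R] [Ring A] [Algebra R A]

namespace LinearMap.IsDerivation

variable {D D' : A →ₗ[R] A}

theorem map_one (hD : D.IsDerivation) : D 1 = 0 := by
  simpa using hD 1 1

theorem map_algebraMap (hD : D.IsDerivation) (r : R) : D (algebraMap R A r) = 0 := by
  rw [Algebra.algebraMap_eq_smul_one, map_smul, hD.map_one, smul_zero]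

theorem commutator (hD : D.IsDerivation) (hD' : D'.IsDerivation) :
    (D * D' - D' * D).IsDerivation := by
  intro a b
  simp only [sub_apply, Module.End.mul_apply, hD a b, hD' a b, map_add, hD (D' a) b,
    hD a (D' b), hD' (D a) b, hD' a (D b)]
  noncomm_ring

end LinearMap.IsDerivation

theorem FreeAlgebra.isDerivation_ext {X : Type*} {D D' : FreeAlgebra R X →ₗ[R] FreeAlgebra R X}
    (hD : D.IsDerivation) (hD' : D'.IsDerivation) (h : ∀ x, D (ι R x) = D' (ι R x)) :
    D = D' := by
  ext v
  induction v using FreeAlgebra.induction with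
  | grade0 r => rw [hD.map_algebraMap, hD'.map_algebraMap]
  | grade1 x => exact h x
  | mul a b ha hb => rw [hD, hD', ha, hb]
  | add a b ha hb => rw [map_add, map_add, ha, hb]

theorem TrivSqZeroExt.snd_map_mul_of_fst_eq (F : A →ₐ[R] TrivSqZeroExt A A)
    (hF : ∀ a, (F a).fst = a) (a b : A) : (F (a * b)).snd = (F a).snd * b + a * (F b).snd := by
  rw [map_mul, snd_mul, hF, hF, smul_eq_mul, op_smul_eq_mul, add_comm]

theorem TrivSqZeroExt.list_prod_map_inl_add_inr {X : Type*} (f g : X → A) (d : X) (l : List X) :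
    (l.map fun x => (inl (f x) + inr (g x) : TrivSqZeroExt A A)).prod = inl (l.map f).prod +
      inr (∑ i ∈ Finset.range l.length,
        ((l.take i).map f).prod * g (l.getD i d) * ((l.drop (i + 1)).map f).prod) := by
  induction l with
  | nil => simp
  | cons x l ih =>
    rw [List.map_cons, List.prod_cons, ih, List.length_cons, Finset.sum_range_succ']
    simp only [List.take_succ_cons, List.getD_cons_succ, List.drop_succ_cons, List.map_cons,
      List.prod_cons, List.take_zero, List.getD_cons_zero, List.drop_zero, List.map_nil,
      List.prod_nil, one_mul, add_mul, mul_add, inl_mul_inl, inl_mul_inr, inr_mul_inl,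
      inr_mul_inr, smul_eq_mul, op_smul_eq_mul, Finset.mul_sum, mul_assoc, inr_add, add_zero]
    abel

theorem FreeAlgebra.basisFreeMonoid_apply {X : Type*} (w : FreeMonoid X) :
    basisFreeMonoid R X w = (w.toList.map (ι R)).prod := by
  have hι : ⇑equivMonoidAlgebraFreeMonoid ∘ ι R =
      MonoidAlgebra.of R (FreeMonoid X) ∘ FreeMonoid.of := by
    funext x
    simp [equivMonoidAlgebraFreeMonoid]
  have hw : (w.toList.map FreeMonoid.of).prod = w := by
    rw [← FreeMonoid.lift_apply]
    exact DFunLike.congr_fun (FreeMonoid.lift_restrict (MonoidHom.id _)) w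
  rw [basisFreeMonoid, Module.Basis.map_apply, Finsupp.coe_basisSingleOne]
  change equivMonoidAlgebraFreeMonoid.symm (MonoidAlgebra.single w 1) = _
  rw [AlgEquiv.symm_apply_eq, map_list_prod, List.map_map, hι, ← List.map_map, ← map_list_prod,
    hw]
  rfl

theorem FreeAlgebra.fst_lift_inl_add_inr {X : Type*} (g : X → FreeAlgebra R X)
    (a : FreeAlgebra R X) : (lift R (fun x => inl (ι R x) + inr (g x)) a).fst = a := by
  have h : (fstHom R _ _).comp (lift R fun x => inl (ι R x) + inr (g x)) = AlgHom.id R _ :=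
    hom_ext <| funext fun x => by simp
  exact DFunLike.congr_fun h a

end Derivations

section Generators

omit [CharZero k]

theorem derOn_eq_snd_lift (g : Fin 2 → U k) (v : U k) :
    derOn k g v = (FreeAlgebra.lift k (fun i => inl (FreeAlgebra.ι k i) + inr (g i)) v).snd := by
  set F := FreeAlgebra.lift k fun i => inl (FreeAlgebra.ι k i) + inr (g i)
  suffices derOn k g = ((sndHom (U k) (U k)).restrictScalars k).comp F.toLinearMap from
    LinearMap.congr_fun this v
  refine (FreeAlgebra.basisFreeMonoid k (Fin 2)).ext fun w => ?_
  rw [derOn, Module.Basis.constr_basis, LinearMap.comp_apply, AlgHom.toLinearMap_apply,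
    FreeAlgebra.basisFreeMonoid_apply, map_list_prod, List.map_map]
  simp only [F, Function.comp_def, FreeAlgebra.lift_ι_apply,
    TrivSqZeroExt.list_prod_map_inl_add_inr _ g 0, LinearMap.restrictScalars_apply, sndHom_apply,
    snd_add, snd_inl, snd_inr, zero_add]

theorem isDerivation_derOn (g : Fin 2 → U k) : (derOn k g).IsDerivation := fun a b => by
  simp only [derOn_eq_snd_lift]
  exact TrivSqZeroExt.snd_map_mul_of_fst_eq _ (FreeAlgebra.fst_lift_inl_add_inr g) a b

theorem derOn_ι (g : Fin 2 → U k) (i : Fin 2) : derOn k g (FreeAlgebra.ι k i) = g i := by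
  simp [derOn_eq_snd_lift]

theorem isDerivation_dF (ψ : U k) : (dF k ψ).IsDerivation :=
  isDerivation_derOn k _

theorem dF_X0 (ψ : U k) : dF k ψ (X0 k) = 0 :=
  derOn_ι k _ 0

theorem dF_X1 (ψ : U k) : dF k ψ (X1 k) = X1 k * ψ - ψ * X1 k :=
  derOn_ι k _ 1

theorem dF_commutator (ψ₁ ψ₂ : U k) :
    dF k ψ₂ * dF k ψ₁ - dF k ψ₁ * dF k ψ₂ = dF k (br k ψ₁ ψ₂) := by
  refine FreeAlgebra.isDerivation_ext ((isDerivation_dF k ψ₂).commutator (isDerivation_dF k ψ₁))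
    (isDerivation_dF k _) fun i => ?_
  fin_cases i
  · change (dF k ψ₂ * dF k ψ₁ - dF k ψ₁ * dF k ψ₂) (X0 k) = dF k _ (X0 k)
    simp [dF_X0]
  · change (dF k ψ₂ * dF k ψ₁ - dF k ψ₁ * dF k ψ₂) (X1 k) = dF k _ (X1 k)
    simp only [LinearMap.sub_apply, Module.End.mul_apply, dF_X1, map_sub, isDerivation_dF k _ _ _,
      br]
    noncomm_ring

end Generators

theorem s_bracket (ψ₁ ψ₂ : U k) :
    ∀ v : U k, sF k (br k ψ₁ ψ₂) v = sF k ψ₂ (sF k ψ₁ v) - sF k ψ₁ (sF k ψ₂ v) := by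
  intro v
  have hcomm : dF k ψ₂ (dF k ψ₁ v) - dF k ψ₁ (dF k ψ₂ v) = dF k (br k ψ₁ ψ₂) v :=
    LinearMap.congr_fun (dF_commutator k ψ₁ ψ₂) v
  simp only [sF, map_add, isDerivation_dF k _ _ _]
  rw [← hcomm, br]
  noncomm_ring

end
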